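/- For every environment μ, the sum over all actions a ∈ Z(μ) of β(a) equals |A|. -/
import Mathlib


open scoped Classical

/-- A finite rooted tree whose internal nodes are partitioned into infosets `N`
and actions `A`: the root is an infoset, every child of an infoset is an action,
every child of an action is an infoset or a leaf, and every infoset has at
least two children.  The tree structure is given by a parent function together
with a depth function witnessing well-foundedness. -/
structure EFTree (V : Type*) [Fintype V] [DecidableEq V] where
  root : V
  parent : V → V
  parent_root : parent root = root
  depth : V → ℕ
  depth_root : depth root = 0
  depth_parent : ∀ v : V, v ≠ root → depth v = depth (parent v) + 1
  N : Finset V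
  A : Finset V
  disj : Disjoint N A
  internal_iff : ∀ v : V, (v ∈ N ∨ v ∈ A) ↔ ∃ u : V, u ≠ root ∧ parent u = v
  root_N : root ∈ N
  infoset_child : ∀ u : V, u ≠ root → parent u ∈ N → u ∈ A
  action_child : ∀ u : V, u ≠ root → parent u ∈ A → u ∉ A
  branching : ∀ v ∈ N, 1 < (Finset.univ.filter fun u => u ≠ root ∧ parent u = v).card

namespace EFTree

variable {V : Type*} [Fintype V] [DecidableEq V] (T : EFTree V)

/-- The set `C(v)` of children of a node `v`. -/
def children (v : V) : Finset V := Finset.univ.filter fun u => u ≠ T.root ∧ T.parent u = v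

/-- The set `L` of leaves: the nodes that are neither infosets nor actions. -/
def leaves : Finset V := Finset.univ \ (T.N ∪ T.A)

/-- `Desc u v` means `u` is a descendant of `v` (every node is a descendant of itself). -/
def Desc (u v : V) : Prop := ∃ k : ℕ, T.parent^[k] u = v

/-- The reachable set `V(σ)` of a (sub-)strategy `σ` started at the node `w`:
the minimal set of nodes containing `w`, containing `σ v` for every infoset `v`
in the set, and containing all children of every action in the set. -/
def reachFrom (w : V) (σ : V → V) : Set V :=
  ⋂₀ {s : Set V | w ∈ s ∧ (∀ v ∈ T.N, v ∈ s → σ v ∈ s) ∧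
      ∀ a ∈ T.A, a ∈ s → ∀ u ∈ T.children a, u ∈ s}

/-- The reachable set `V(σ)` of a strategy `σ`. -/
def reachS (σ : V → V) : Set V := T.reachFrom T.root σ

/-- `σ : V → V` canonically represents a reduced sub-strategy at the node `w`:
at every infoset in its reachable set it selects a child, and everywhere else it
is the identity (so that each reduced sub-strategy, i.e. each restriction of a
sub-strategy at `w` to the infosets it can reach, has exactly one
representative). -/
def IsRedSubStrat (w : V) (σ : V → V) : Prop :=
  (∀ v ∈ T.N, v ∈ T.reachFrom w σ → σ v ∈ T.children v) ∧
  ∀ v : V, ¬(v ∈ T.N ∧ v ∈ T.reachFrom w σ) → σ v = v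

/-- `σ : V → V` canonically represents a reduced strategy, i.e. a member of `S`. -/
def IsRedStrat (σ : V → V) : Prop := T.IsRedSubStrat T.root σ

/-- The set `A(σ) = A ∩ V(σ)` of actions reachable under a reduced (sub-)strategy. -/
noncomputable def Aset (σ : V → V) : Finset V := T.A.filter fun a => a ∈ T.reachS σ

/-- The set `A(σ) = A ∩ V(σ)` for a reduced sub-strategy at `w`. -/
noncomputable def AsetFrom (w : V) (σ : V → V) : Finset V := T.A.filter fun a => a ∈ T.reachFrom w σ

/-- An environment chooses a child of every action. -/
def IsEnv (μ : V → V) : Prop := ∀ a ∈ T.A, μ a ∈ T.children a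

/-- The reachable set `V(μ)` of an environment `μ`: the minimal set of nodes
containing the root, all children of every infoset in the set, and `μ a` for
every action `a` in the set. -/
def reachE (μ : V → V) : Set V :=
  ⋂₀ {s : Set V | T.root ∈ s ∧ (∀ v ∈ T.N, v ∈ s → ∀ u ∈ T.children v, u ∈ s) ∧
      ∀ a ∈ T.A, a ∈ s → μ a ∈ s}

/-- `Z(μ)`: the set of actions reachable under `μ` whose chosen child is a leaf. -/
noncomputable def Zset (μ : V → V) : Finset V := T.A.filter fun a => a ∈ T.reachE μ ∧ μ a ∈ T.leaves

/-- A policy assigns to each action a probability in `[0,1]`, summing to one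
over the children of each infoset. -/
def IsPolicy (π : V → ℝ) : Prop :=
  (∀ a ∈ T.A, 0 ≤ π a ∧ π a ≤ 1) ∧ ∀ v ∈ T.N, ∑ a ∈ T.children v, π a = 1

/-- The root-to-leaf path traversed when the reduced strategy `σ` is played
against the environment `μ`: the minimal set of nodes containing the root,
containing `σ v` for every infoset `v` in the set, and `μ a` for every action
`a` in the set. -/
def playPath (σ μ : V → V) : Set V :=
  ⋂₀ {s : Set V | T.root ∈ s ∧ (∀ v ∈ T.N, v ∈ s → σ v ∈ s) ∧
      ∀ a ∈ T.A, a ∈ s → μ a ∈ s}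

/-- `z` is the last action node on the play path of `(σ, μ)`: it is an action on
the path of which every other action on the path is an ancestor. -/
def IsLastAction (σ μ : V → V) (z : V) : Prop :=
  z ∈ T.A ∧ z ∈ T.playPath σ μ ∧ ∀ a ∈ T.A, a ∈ T.playPath σ μ → T.Desc z a

end EFTree

namespace EFTree

variable {V : Type*} [Fintype V] [DecidableEq V] (T : EFTree V)

lemma root_of_depth_eq_zero {v : V} (h : T.depth v = 0) : v = T.root := by
  by_contra hv
  have := T.depth_parent v hv
  omega

lemma depth_iterate : ∀ (k : ℕ) (u : V), k ≤ T.depth u →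
    T.depth (T.parent^[k] u) = T.depth u - k := by
  intro k
  induction k with
  | zero => intro u _; simp
  | succ k ih =>
    intro u hk
    have h1 := ih u (by omega)
    have hne : T.parent^[k] u ≠ T.root := by
      intro h; rw [h, T.depth_root] at h1; omega
    have h2 := T.depth_parent _ hne
    rw [Function.iterate_succ_apply']
    omega

lemma iterate_root : ∀ k, T.parent^[k] T.root = T.root := by
  intro k; induction k with
  | zero => rfl
  | succ k ih => rw [Function.iterate_succ_apply', ih, T.parent_root]

lemma iterate_depth (u : V) : T.parent^[T.depth u] u = T.root :=
  T.root_of_depth_eq_zero (by have := T.depth_iterate (T.depth u) u le_rfl; omega)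

lemma desc_spec {u v : V} (h : T.Desc u v) :
    T.depth v ≤ T.depth u ∧ T.parent^[T.depth u - T.depth v] u = v := by
  obtain ⟨k, hk⟩ := h
  rcases le_or_gt k (T.depth u) with hle | hlt
  · have hd := T.depth_iterate k u hle
    rw [hk] at hd
    have hk' : T.depth u - T.depth v = k := by omega
    exact ⟨by omega, by rw [hk']; exact hk⟩
  · have hv : v = T.root := by
      rw [show k = (k - T.depth u) + T.depth u by omega, Function.iterate_add_apply,
        T.iterate_depth, T.iterate_root] at hk
      exact hk.symm
    subst hv
    rw [T.depth_root]
    exact ⟨Nat.zero_le _, by simpa using T.iterate_depth u⟩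

lemma desc_refl (v : V) : T.Desc v v := ⟨0, rfl⟩

lemma desc_depth_le {u v : V} (h : T.Desc u v) : T.depth v ≤ T.depth u := (T.desc_spec h).1

lemma desc_trans {u v w : V} (h1 : T.Desc u v) (h2 : T.Desc v w) : T.Desc u w := by
  obtain ⟨k, hk⟩ := h1; obtain ⟨l, hl⟩ := h2
  exact ⟨l + k, by rw [Function.iterate_add_apply, hk, hl]⟩

lemma desc_of_parent {u v : V} (h : T.parent u = v) : T.Desc u v := ⟨1, h⟩

lemma mem_children {u v : V} : u ∈ T.children v ↔ u ≠ T.root ∧ T.parent u = v := by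
  simp [children]

lemma desc_parent {u v : V} (h : T.Desc u v) (hne : u ≠ v) : T.Desc (T.parent u) v := by
  obtain ⟨k, hk⟩ := h
  match k, hk with
  | 0, hk => exact absurd hk hne
  | k+1, hk => exact ⟨k, by rw [← Function.iterate_succ_apply]; exact hk⟩

lemma depth_child {u v : V} (h : u ∈ T.children v) : T.depth u = T.depth v + 1 := by
  rw [T.mem_children] at h
  rw [T.depth_parent u h.1, h.2]

lemma desc_child {u v : V} (h : T.Desc u v) (hne : u ≠ v) :
    ∃ c ∈ T.children v, T.Desc u c := by
  obtain ⟨hd, hit⟩ := T.desc_spec h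
  set d := T.depth u - T.depth v with hdd
  have hd1 : 1 ≤ d := by
    rcases Nat.eq_zero_or_pos d with h0 | h1
    · rw [h0] at hit; exact absurd hit hne
    · exact h1
  refine ⟨T.parent^[d-1] u, ?_, ⟨d-1, rfl⟩⟩
  have hc : T.parent (T.parent^[d-1] u) = v := by
    have hsucc : T.parent^[(d-1)+1] u = T.parent (T.parent^[d-1] u) :=
      Function.iterate_succ_apply' _ _ _
    rw [← hsucc, show d - 1 + 1 = d from by omega]
    exact hit
  have hdc : T.depth (T.parent^[d-1] u) = T.depth u - (d-1) :=
    T.depth_iterate _ u (by omega)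
  rw [T.mem_children]
  refine ⟨?_, hc⟩
  intro hroot
  rw [hroot, T.depth_root] at hdc
  omega

lemma desc_unique_child {u v c1 c2 : V} (h1 : c1 ∈ T.children v) (h2 : c2 ∈ T.children v)
    (hd1 : T.Desc u c1) (hd2 : T.Desc u c2) : c1 = c2 := by
  have e1 := T.desc_spec hd1
  have e2 := T.desc_spec hd2
  have hd : T.depth c1 = T.depth c2 := by rw [T.depth_child h1, T.depth_child h2]
  rw [← e1.2, ← e2.2, hd]

lemma not_desc_of_child {v c : V} (h : c ∈ T.children v) : ¬ T.Desc v c := by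
  intro hd
  have h1 := T.desc_depth_le hd
  have h2 := T.depth_child h
  omega

/-- The finset of descendants of `v`. -/
noncomputable def descF (v : V) : Finset V := Finset.univ.filter fun u => T.Desc u v

lemma mem_descF {u v : V} : u ∈ T.descF v ↔ T.Desc u v := by simp [descF]

lemma descF_eq (v : V) :
    T.descF v = insert v ((T.children v).biUnion fun c => T.descF c) := by
  ext u
  simp only [mem_descF, Finset.mem_insert, Finset.mem_biUnion]
  constructor
  · intro h
    by_cases hu : u = v
    · exact Or.inl hu
    · obtain ⟨c, hc, hd⟩ := T.desc_child h hu
      exact Or.inr ⟨c, hc, hd⟩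
  · rintro (rfl | ⟨c, hc, hd⟩)
    · exact T.desc_refl u
    · exact T.desc_trans hd (T.desc_of_parent (T.mem_children.mp hc).2)

lemma sum_descF {M : Type*} [AddCommMonoid M] (f : V → M) (v : V) :
    ∑ u ∈ T.descF v, f u = f v + ∑ c ∈ T.children v, ∑ u ∈ T.descF c, f u := by
  rw [T.descF_eq v, Finset.sum_insert, Finset.sum_biUnion]
  · intro c1 h1 c2 h2 hne
    apply Finset.disjoint_left.mpr
    intro u hu1 hu2
    exact hne (T.desc_unique_child h1 h2 (T.mem_descF.mp hu1) (T.mem_descF.mp hu2))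
  · simp only [Finset.mem_biUnion, mem_descF, not_exists, not_and]
    intro c hc
    exact T.not_desc_of_child hc

lemma descF_card_lt {v c : V} (hc : c ∈ T.children v) :
    (T.descF c).card < (T.descF v).card := by
  apply Finset.card_lt_card
  constructor
  · intro u hu
    exact T.mem_descF.mpr
      (T.desc_trans (T.mem_descF.mp hu) (T.desc_of_parent (T.mem_children.mp hc).2))
  · intro hsub
    exact T.not_desc_of_child hc (T.mem_descF.mp (hsub (T.mem_descF.mpr (T.desc_refl v))))

lemma child_ne_root {u v : V} (h : u ∈ T.children v) : u ≠ T.root := (T.mem_children.mp h).1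

lemma internal_of_child {u v : V} (h : u ∈ T.children v) : v ∈ T.N ∨ v ∈ T.A :=
  (T.internal_iff v).mpr ⟨u, (T.mem_children.mp h).1, (T.mem_children.mp h).2⟩

lemma mem_leaves {v : V} : v ∈ T.leaves ↔ v ∉ T.N ∧ v ∉ T.A := by
  simp [leaves]

lemma descF_leaf {v : V} (hv : v ∉ T.N) (hva : v ∉ T.A) : T.descF v = {v} := by
  rw [descF_eq]
  have hce : T.children v = ∅ := by
    rw [Finset.eq_empty_iff_forall_notMem]
    intro u hu
    rcases T.internal_of_child hu with h | h
    exacts [hv h, hva h]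
  rw [hce]
  simp

lemma child_of_infoset_mem_A {v a : V} (hv : v ∈ T.N) (ha : a ∈ T.children v) : a ∈ T.A :=
  T.infoset_child a (T.child_ne_root ha) (by rw [(T.mem_children.mp ha).2]; exact hv)

lemma child_of_action_not_A {a c : V} (ha : a ∈ T.A) (hc : c ∈ T.children a) : c ∉ T.A :=
  T.action_child c (T.child_ne_root hc) (by rw [(T.mem_children.mp hc).2]; exact ha)

lemma m_eq (m : V → ℕ)
    (hmA : ∀ a ∈ T.A, m a = 1 + ∑ v ∈ (T.children a).filter (· ∈ T.N), m v)
    (hmN : ∀ v ∈ T.N, m v = ∑ a ∈ T.children v, m a) :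
    ∀ v : V, (v ∈ T.N ∨ v ∈ T.A) →
      m v = ∑ u ∈ T.descF v, (if u ∈ T.A then 1 else 0) := by
  suffices h : ∀ n : ℕ, ∀ v : V, (T.descF v).card ≤ n → (v ∈ T.N ∨ v ∈ T.A) →
      m v = ∑ u ∈ T.descF v, (if u ∈ T.A then 1 else 0) by
    intro v hv; exact h _ v le_rfl hv
  intro n
  induction n with
  | zero =>
    intro v hc _
    exact absurd (Finset.card_pos.mpr ⟨v, T.mem_descF.mpr (T.desc_refl v)⟩) (by omega)
  | succ n ih =>
    intro v hc hv
    rw [T.sum_descF]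
    rcases hv with hvN | hvA
    · have hvnotA : v ∉ T.A := fun h => Finset.disjoint_left.mp T.disj hvN h
      rw [if_neg hvnotA, hmN v hvN, zero_add]
      apply Finset.sum_congr rfl
      intro a ha
      exact ih a (by have := T.descF_card_lt ha; omega)
        (Or.inr (T.child_of_infoset_mem_A hvN ha))
    · rw [if_pos hvA, hmA v hvA]
      congr 1
      rw [← Finset.sum_filter_add_sum_filter_not (T.children v) (· ∈ T.N)]
      have h0 : ∑ c ∈ (T.children v).filter (fun c => ¬ c ∈ T.N),
          ∑ u ∈ T.descF c, (if u ∈ T.A then 1 else 0) = 0 := by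
        apply Finset.sum_eq_zero
        intro c hcm
        rw [Finset.mem_filter] at hcm
        have hcnotA : c ∉ T.A := T.child_of_action_not_A hvA hcm.1
        rw [T.descF_leaf hcm.2 hcnotA]
        simp [hcnotA]
      rw [h0, add_zero]
      apply Finset.sum_congr rfl
      intro c hcm
      rw [Finset.mem_filter] at hcm
      exact ih c (by have := T.descF_card_lt hcm.1; omega) (Or.inl hcm.2)

lemma descF_root : T.descF T.root = Finset.univ := by
  ext u
  simp only [Finset.mem_univ, iff_true, mem_descF]
  exact ⟨T.depth u, T.iterate_depth u⟩

lemma children_nonempty {v : V} (hv : v ∈ T.N) : (T.children v).Nonempty := by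
  have h := T.branching v hv
  rw [← Finset.card_pos, children]
  rw [show (Finset.univ.filter fun u => u ≠ T.root ∧ T.parent u = v) =
      Finset.univ.filter fun u => u ≠ T.root ∧ T.parent u = v from
      Finset.filter_congr_decidable _ _ _] at h ⊢
  omega

lemma m_pos (m : V → ℕ)
    (hmA : ∀ a ∈ T.A, m a = 1 + ∑ v ∈ (T.children a).filter (· ∈ T.N), m v)
    (hmN : ∀ v ∈ T.N, m v = ∑ a ∈ T.children v, m a)
    {v : V} (hv : v ∈ T.N) : 0 < m v := by
  rw [hmN v hv]
  obtain ⟨a, ha⟩ := T.children_nonempty hv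
  have h1 : 0 < m a := by rw [hmA a (T.child_of_infoset_mem_A hv ha)]; omega
  exact lt_of_lt_of_le h1 (Finset.single_le_sum (fun i _ => Nat.zero_le _) ha)

lemma reachE_spec {μ : V → V} {s : Set V}
    (h1 : T.root ∈ s) (h2 : ∀ v ∈ T.N, v ∈ s → ∀ u ∈ T.children v, u ∈ s)
    (h3 : ∀ a ∈ T.A, a ∈ s → μ a ∈ s) : T.reachE μ ⊆ s :=
  Set.sInter_subset_of_mem ⟨h1, h2, h3⟩

lemma root_mem_reachE (μ : V → V) : T.root ∈ T.reachE μ :=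
  Set.mem_sInter.mpr fun _ hs => hs.1

lemma child_mem_reachE {μ : V → V} {v u : V} (hv : v ∈ T.N) (hr : v ∈ T.reachE μ)
    (hu : u ∈ T.children v) : u ∈ T.reachE μ :=
  Set.mem_sInter.mpr fun s hs => hs.2.1 v hv (Set.mem_sInter.mp hr s hs) u hu

lemma mu_mem_reachE {μ : V → V} {a : V} (ha : a ∈ T.A) (hr : a ∈ T.reachE μ) :
    μ a ∈ T.reachE μ :=
  Set.mem_sInter.mpr fun s hs => hs.2.2 a ha (Set.mem_sInter.mp hr s hs)

lemma reachE_below {μ : V → V} (hμ : T.IsEnv μ) {a : V} (ha : a ∈ T.A)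
    (har : a ∈ T.reachE μ) :
    ∀ u ∈ T.reachE μ, T.Desc u a → u = a ∨ T.Desc u (μ a) := by
  have key : T.reachE μ ⊆ {u | u ∈ T.reachE μ ∧ (T.Desc u a → u = a ∨ T.Desc u (μ a))} := by
    apply T.reachE_spec
    · refine ⟨T.root_mem_reachE μ, ?_⟩
      intro hd
      obtain ⟨k, hk⟩ := hd
      rw [T.iterate_root] at hk
      exact Or.inl hk
    · intro v hv hvs u hu
      refine ⟨T.child_mem_reachE hv hvs.1 hu, ?_⟩
      intro hd
      by_cases hua : u = a
      · exact Or.inl hua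
      · right
        have hpv : T.Desc v a := by
          have h := T.desc_parent hd hua
          rwa [(T.mem_children.mp hu).2] at h
        rcases hvs.2 hpv with hva | hvd
        · exact absurd (by rw [hva]; exact ha) (Finset.disjoint_left.mp T.disj hv)
        · exact T.desc_trans (T.desc_of_parent (T.mem_children.mp hu).2) hvd
    · intro b hb hbs
      refine ⟨T.mu_mem_reachE hb hbs.1, ?_⟩
      intro hd
      by_cases hba : b = a
      · subst hba; exact Or.inr (T.desc_refl _)
      · by_cases hua : μ b = a
        · exact Or.inl hua
        · right
          have hpb : T.parent (μ b) = b := (T.mem_children.mp (hμ b hb)).2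
          have hdb : T.Desc b a := by
            have h := T.desc_parent hd hua; rwa [hpb] at h
          rcases hbs.2 hdb with h | h
          · exact absurd h hba
          · exact T.desc_trans (T.desc_of_parent hpb) h
  intro u hu hd
  exact (key hu).2 hd

lemma main_sum (m : V → ℕ)
    (hmA : ∀ a ∈ T.A, m a = 1 + ∑ v ∈ (T.children a).filter (· ∈ T.N), m v)
    (hmN : ∀ v ∈ T.N, m v = ∑ a ∈ T.children v, m a)
    (β : V → ℝ)
    (hβA : ∀ a ∈ T.A, β a = (m a : ℝ) * β (T.parent a))
    (hβN : ∀ v ∈ T.N, v ≠ T.root → β v = β (T.parent v) / (m v : ℝ))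
    (μ : V → V) (hμ : T.IsEnv μ) :
    ∀ n : ℕ, ∀ v : V, (T.descF v).card ≤ n → v ∈ T.reachE μ →
      ((v ∈ T.N → (∑ u ∈ T.descF v, if u ∈ T.Zset μ then β u else 0) = β v * m v) ∧
       (v ∈ T.A → (∑ u ∈ T.descF v, if u ∈ T.Zset μ then β u else 0) = β v)) := by
  intro n
  induction n with
  | zero =>
    intro v hc _
    exact absurd (Finset.card_pos.mpr ⟨v, T.mem_descF.mpr (T.desc_refl v)⟩) (by omega)
  | succ n ih =>
    intro v hc hvr
    constructor
    · intro hvN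
      rw [T.sum_descF]
      have hv0 : (if v ∈ T.Zset μ then β v else 0) = 0 := by
        rw [if_neg]
        intro h
        exact Finset.disjoint_left.mp T.disj hvN (Finset.mem_filter.mp h).1
      rw [hv0, zero_add, hmN v hvN, Nat.cast_sum, Finset.mul_sum]
      apply Finset.sum_congr rfl
      intro a ha
      have haA : a ∈ T.A := T.child_of_infoset_mem_A hvN ha
      have har : a ∈ T.reachE μ := T.child_mem_reachE hvN hvr ha
      rw [(ih a (by have := T.descF_card_lt ha; omega) har).2 haA, hβA a haA,
        (T.mem_children.mp ha).2]
      ring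
    · intro hvA
      rw [T.sum_descF]
      have hw : μ v ∈ T.children v := hμ v hvA
      have hwr : μ v ∈ T.reachE μ := T.mu_mem_reachE hvA hvr
      by_cases hwl : μ v ∈ T.leaves
      · have hvz : v ∈ T.Zset μ := Finset.mem_filter.mpr ⟨hvA, hvr, hwl⟩
        rw [if_pos hvz]
        have hzero : ∀ c ∈ T.children v,
            (∑ u ∈ T.descF c, if u ∈ T.Zset μ then β u else 0) = 0 := by
          intro c hcm
          apply Finset.sum_eq_zero
          intro u hu
          rw [if_neg]
          intro huz
          have huA : u ∈ T.A := (Finset.mem_filter.mp huz).1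
          have hur : u ∈ T.reachE μ := (Finset.mem_filter.mp huz).2.1
          have hdu : T.Desc u c := T.mem_descF.mp hu
          have hdv : T.Desc u v :=
            T.desc_trans hdu (T.desc_of_parent (T.mem_children.mp hcm).2)
          have hune : u ≠ v := by
            intro h; rw [h] at hdu; exact T.not_desc_of_child hcm hdu
          rcases T.reachE_below hμ hvA hvr u hur hdv with h | h
          · exact hune h
          · rcases eq_or_ne u (μ v) with he | hne2
            · rw [he] at huA; exact (T.mem_leaves.mp hwl).2 huA
            · obtain ⟨c', hc', _⟩ := T.desc_child h hne2
              rcases T.internal_of_child hc' with hN | hA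
              · exact (T.mem_leaves.mp hwl).1 hN
              · exact (T.mem_leaves.mp hwl).2 hA
        rw [Finset.sum_eq_zero hzero, add_zero]
      · have hwN : μ v ∈ T.N := by
          rcases (Decidable.em (μ v ∈ T.N)) with h | h
          · exact h
          · exfalso
            rcases (Decidable.em (μ v ∈ T.A)) with h2 | h2
            · exact T.child_of_action_not_A hvA hw h2
            · exact hwl (T.mem_leaves.mpr ⟨h, h2⟩)
        have hv0 : (if v ∈ T.Zset μ then β v else 0) = 0 := by
          rw [if_neg]
          intro h
          exact hwl (Finset.mem_filter.mp h).2.2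
        rw [hv0, zero_add]
        have hzero : ∀ c ∈ T.children v, c ≠ μ v →
            (∑ u ∈ T.descF c, if u ∈ T.Zset μ then β u else 0) = 0 := by
          intro c hcm hcne
          apply Finset.sum_eq_zero
          intro u hu
          rw [if_neg]
          intro huz
          have hur : u ∈ T.reachE μ := (Finset.mem_filter.mp huz).2.1
          have hdu : T.Desc u c := T.mem_descF.mp hu
          have hdv : T.Desc u v :=
            T.desc_trans hdu (T.desc_of_parent (T.mem_children.mp hcm).2)
          have hune : u ≠ v := by
            intro h; rw [h] at hdu; exact T.not_desc_of_child hcm hdu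
          rcases T.reachE_below hμ hvA hvr u hur hdv with h | h
          · exact hune h
          · exact hcne (T.desc_unique_child hcm hw hdu h)
        rw [Finset.sum_eq_single_of_mem (μ v) hw hzero]
        rw [(ih (μ v) (by have := T.descF_card_lt hw; omega) hwr).1 hwN,
          hβN _ hwN (T.child_ne_root hw), (T.mem_children.mp hw).2]
        have hm : (0:ℝ) < (m (μ v) : ℝ) := by exact_mod_cast T.m_pos m hmA hmN hwN
        field_simp

end EFTree

theorem stmt6 {V : Type*} [Fintype V] [DecidableEq V] (T : EFTree V)
    (m : V → ℕ)
    (hmA : ∀ a ∈ T.A, m a = 1 + ∑ v ∈ (T.children a).filter (· ∈ T.N), m v)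
    (hmN : ∀ v ∈ T.N, m v = ∑ a ∈ T.children v, m a)
    (β : V → ℝ) (hβr : β T.root = 1)
    (hβA : ∀ a ∈ T.A, β a = (m a : ℝ) * β (T.parent a))
    (hβN : ∀ v ∈ T.N, v ≠ T.root → β v = β (T.parent v) / (m v : ℝ))
    (μ : V → V) (hμ : T.IsEnv μ) :
    ∑ a ∈ T.Zset μ, β a = (T.A.card : ℝ) := by
  have hroot := (T.main_sum m hmA hmN β hβA hβN μ hμ _ T.root le_rfl
    (T.root_mem_reachE μ)).1 T.root_N
  rw [T.descF_root, hβr, one_mul] at hroot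
  have hm := T.m_eq m hmA hmN T.root (Or.inl T.root_N)
  rw [T.descF_root] at hm
  have hmcard : m T.root = T.A.card := by
    rw [hm, Finset.sum_ite_mem, Finset.univ_inter, Finset.sum_const, smul_eq_mul, mul_one]
  rw [hmcard] at hroot
  rw [← hroot, Finset.sum_ite_mem, Finset.univ_inter]
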